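/- In B_n(ω), the Jucys–Murphy element x_n commutes with each of the generators s_1,…,s_{n−2}, e_1,…,e_{n−2} (hence with the whole subalgebra B_{n−1}(ω)), and consequently the elements x_1,…,x_n pairwise commute. -/

import Mathlib

/-!
Common definitions for the fusion procedure for the Brauer algebra
(Isaev–Molev, "Fusion procedure for the Brauer algebra").
-/

noncomputable section
open scoped BigOperators
open Classical

namespace BrauerFusion

/-- The base field `F = ℂ(ω)`. -/
abbrev F : Type := RatFunc ℂ

/-- The indeterminate `ω ∈ ℂ(ω)`. -/
def ωF : F := RatFunc.X

/-- `s e : ℕ → A` satisfy the defining relations of the Brauer algebra `B_n(ω)`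
over the commutative base `R`; here `s i`, `e i` represent the generators
`s_i`, `e_i` for `1 ≤ i ≤ n - 1` (values at other indices are irrelevant). -/
structure IsBrauer {R : Type*} {A : Type*} [CommRing R] [Ring A] [Algebra R A]
    (n : ℕ) (ω : R) (s e : ℕ → A) : Prop where
  ss : ∀ i, 1 ≤ i → i + 1 ≤ n → s i * s i = 1
  ee : ∀ i, 1 ≤ i → i + 1 ≤ n → e i * e i = ω • e i
  se : ∀ i, 1 ≤ i → i + 1 ≤ n → s i * e i = e i
  es : ∀ i, 1 ≤ i → i + 1 ≤ n → e i * s i = e i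
  ss_comm : ∀ i j, 1 ≤ i → j + 1 ≤ n → i + 1 < j → s i * s j = s j * s i
  ee_comm : ∀ i j, 1 ≤ i → j + 1 ≤ n → i + 1 < j → e i * e j = e j * e i
  se_comm : ∀ i j, 1 ≤ i → j + 1 ≤ n → i + 1 < j → s i * e j = e j * s i
  es_comm : ∀ i j, 1 ≤ i → j + 1 ≤ n → i + 1 < j → s j * e i = e i * s j
  braid : ∀ i, 1 ≤ i → i + 2 ≤ n → s i * s (i+1) * s i = s (i+1) * s i * s (i+1)
  eee₁ : ∀ i, 1 ≤ i → i + 2 ≤ n → e i * e (i+1) * e i = e i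
  eee₂ : ∀ i, 1 ≤ i → i + 2 ≤ n → e (i+1) * e i * e (i+1) = e (i+1)
  see : ∀ i, 1 ≤ i → i + 2 ≤ n → s i * e (i+1) * e i = s (i+1) * e i
  ees : ∀ i, 1 ≤ i → i + 2 ≤ n → e (i+1) * e i * s (i+1) = e (i+1) * s i

variable {A : Type*} [Ring A]

/-- The transposition `s_{ij} = s_i s_{i+1} ⋯ s_{j-2} s_{j-1} s_{j-2} ⋯ s_{i+1} s_i`
(for `i < j`), defined by `s_{i,i+1} = s_i` and `s_{ij} = s_i s_{i+1,j} s_i`. -/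
def sij (s : ℕ → A) (i j : ℕ) : A :=
  if h : i + 1 < j then s i * sij s (i+1) j * s i else s i
termination_by j - i
decreasing_by omega

/-- The element `e_{ij} = s_{i,j-1} e_{j-1} s_{i,j-1}` (for `i < j`), with `e_{i,i+1} = e_i`. -/
def eij (s e : ℕ → A) (i j : ℕ) : A :=
  if i + 1 < j then sij s i (j-1) * e (j-1) * sij s i (j-1) else e i

/-- `x_j^{(m)} = (ω-1)/2 + ∑_{r=1}^{j-1} (s_{rm} - e_{rm})`. -/
def jmM {R : Type*} [Field R] [Algebra R A] (ω : R) (s e : ℕ → A) (j m : ℕ) : A :=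
  algebraMap R A ((ω - 1) / 2) + ∑ r ∈ Finset.Icc 1 (j-1), (sij s r m - eij s e r m)

/-- The Jucys–Murphy element `x_r = (ω-1)/2 + ∑_{k=1}^{r-1} (s_{kr} - e_{kr})`. -/
def jm {R : Type*} [Field R] [Algebra R A] (ω : R) (s e : ℕ → A) (r : ℕ) : A :=
  jmM ω s e r r

/-- The pairs `(i, j)` with `1 ≤ i < j ≤ n` in lexicographic order. -/
def lexPairs (n : ℕ) : List (ℕ × ℕ) :=
  (List.range' 1 n).flatMap fun i =>
    ((List.range' 1 n).filter fun j => decide (i < j)).map fun j => (i, j)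

/-- The rational function
`Ψ(u_1,…,u_n) = ∏_{1≤i<j≤n} (1 - e_{ij}/(u_i+u_j)) ∏_{1≤i<j≤n} (1 - s_{ij}/(u_i-u_j))`,
with ordered products over the pairs `(i,j)` in lexicographic order. -/
def Psi {K : Type*} [Field K] [Algebra K A] (s e : ℕ → A) (n : ℕ) (u : ℕ → K) : A :=
  ((lexPairs n).map fun p => 1 - (u p.1 + u p.2)⁻¹ • eij s e p.1 p.2).prod *
  ((lexPairs n).map fun p => 1 - (u p.1 - u p.2)⁻¹ • sij s p.1 p.2).prod

/-- An updown tableau of length `n`: a sequence of Young diagrams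
`Λ_0 = ∅, Λ_1, …, Λ_n` in which `Λ_r` is obtained from `Λ_{r-1}` by adding
(`add r = true`) or removing (`add r = false`) the box `box r`. -/
structure UpDownTableau (n : ℕ) where
  shape : ℕ → YoungDiagram
  box : ℕ → ℕ × ℕ
  add : ℕ → Bool
  shape_zero : shape 0 = ⊥
  step_add : ∀ r, 1 ≤ r → r ≤ n → add r = true →
    box r ∉ shape (r-1) ∧ (shape r).cells = insert (box r) (shape (r-1)).cells
  step_rem : ∀ r, 1 ≤ r → r ≤ n → add r = false →
    box r ∉ shape r ∧ (shape (r-1)).cells = insert (box r) (shape r).cells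

/-- The content `c_r` of an updown tableau: `(ω-1)/2 + j - i` if the box `(i,j)` was
added at step `r`, and `-((ω-1)/2 + j - i)` if it was removed. -/
def content {R : Type*} [Field R] (ω : R) {n : ℕ} (T : UpDownTableau n) (r : ℕ) : R :=
  if T.add r then (ω - 1) / 2 + ((T.box r).2 : R) - ((T.box r).1 : R)
  else -((ω - 1) / 2 + ((T.box r).2 : R) - ((T.box r).1 : R))

/-- The content attached to a box `b` which can be removed from (`b ∈ μ`) or
added to (`b ∉ μ`) the diagram `μ`. -/
def boxContent {R : Type*} [Field R] (ω : R) (μ : YoungDiagram) (b : ℕ × ℕ) : R :=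
  if b ∈ μ then -((ω - 1) / 2 + (b.2 : R) - (b.1 : R))
  else (ω - 1) / 2 + (b.2 : R) - (b.1 : R)

/-- All boxes `(i,j)` with `i, j < N`, listed in lexicographic order. -/
def gridList (N : ℕ) : List (ℕ × ℕ) :=
  (List.range N).flatMap fun i => (List.range N).map fun j => (i, j)

/-- A box which can be added to, or removed from, the Young diagram `μ`
so that the result is again a Young diagram. -/
def isCandidate (μ : YoungDiagram) (b : ℕ × ℕ) : Prop :=
  (b ∉ μ ∧ ∃ ν : YoungDiagram, ν.cells = insert b μ.cells) ∨
  (b ∈ μ ∧ ∃ ν : YoungDiagram, μ.cells = insert b ν.cells)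

/-- The list of all boxes which can be added to or removed from `μ`. -/
def candList (μ : YoungDiagram) : List (ℕ × ℕ) :=
  (gridList (μ.card + 2)).filter fun b => decide (isCandidate μ b)

/-- The primitive idempotent `E_{(Λ_1,…,Λ_r)}`, defined recursively by `E = 1` for `r = 0`
and `E_T = E_U ∏_a (x_r - a)/(c_r - a)`, the product over the contents `a` of all boxes
(other than the box of step `r`) which can be added to or removed from `Λ_{r-1}`. -/
def idem {R : Type*} [Field R] [Algebra R A] (ω : R) (s e : ℕ → A) {n : ℕ}
    (T : UpDownTableau n) : ℕ → A
  | 0 => 1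
  | r + 1 =>
    idem ω s e T r *
      (((candList (T.shape r)).filter (fun b => decide (b ≠ T.box (r+1)))).map fun b =>
        (content ω T (r+1) - boxContent ω (T.shape r) b)⁻¹ •
          (jm ω s e (r+1) - algebraMap R A (boxContent ω (T.shape r) b))).prod

/-- `d_k` : the number of steps among the first `len` steps of `T` adding a box
on the diagonal `k`. -/
def dAdd {n : ℕ} (T : UpDownTableau n) (len : ℕ) (k : ℤ) : ℤ :=
  (((Finset.Icc 1 len).filter fun t =>
    T.add t = true ∧ ((T.box t).2 : ℤ) - ((T.box t).1 : ℤ) = k).card : ℤ)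

/-- `d'_k` : the number of steps among the first `len` steps of `T` removing a box
on the diagonal `k`. -/
def dRem {n : ℕ} (T : UpDownTableau n) (len : ℕ) (k : ℤ) : ℤ :=
  (((Finset.Icc 1 len).filter fun t =>
    T.add t = false ∧ ((T.box t).2 : ℤ) - ((T.box t).1 : ℤ) = k).card : ℤ)

/-- `g_k = δ_{k0} + d_{k-1} + d_{k+1} - 2 d_k`. -/
def gAdd {n : ℕ} (T : UpDownTableau n) (len : ℕ) (k : ℤ) : ℤ :=
  (if k = 0 then 1 else 0) + dAdd T len (k-1) + dAdd T len (k+1) - 2 * dAdd T len k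

/-- `g'_k = d'_{k-1} + d'_{k+1} - 2 d'_k`. -/
def gRem {n : ℕ} (T : UpDownTableau n) (len : ℕ) (k : ℤ) : ℤ :=
  dRem T len (k-1) + dRem T len (k+1) - 2 * dRem T len k

/-- The diagonal `j - i` of the box of step `r`. -/
def diagOf {n : ℕ} (T : UpDownTableau n) (r : ℕ) : ℤ :=
  ((T.box r).2 : ℤ) - ((T.box r).1 : ℤ)

/-- The exponent `p_r` of an updown tableau: `p_r = 1 - g_{k_r}` if a box is added on the
diagonal `k_r` at step `r`, and `p_r = 1 - g'_{k_r}` if a box is removed, where `g, g'`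
are computed from the first `r - 1` steps. -/
def pExp {n : ℕ} (T : UpDownTableau n) (r : ℕ) : ℤ :=
  1 - (if T.add r then gAdd T (r-1) (diagOf T r) else gRem T (r-1) (diagOf T r))

/-- The factor `φ(U, T)` in the recursive definition of `f(T)`; the products over all
integers `k` are realized as products over `-r-1 ≤ k ≤ r+1`, which contains the support
of `g` and `g'` (all other factors are equal to 1). -/
def phiStep {n : ℕ} (T : UpDownTableau n) (r : ℕ) : F :=
  if T.add r then
    (∏ k ∈ (Finset.Icc (-(r:ℤ)-1) ((r:ℤ)+1)).erase (diagOf T r),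
      ((diagOf T r - k : ℤ) : F) ^ gAdd T (r-1) k) *
    ∏ k ∈ Finset.Icc (-(r:ℤ)-1) ((r:ℤ)+1),
      (((diagOf T r + k : ℤ) : F) + ωF - 1) ^ gRem T (r-1) k
  else
    (∏ k ∈ (Finset.Icc (-(r:ℤ)-1) ((r:ℤ)+1)).erase (diagOf T r),
      ((k - diagOf T r : ℤ) : F) ^ gRem T (r-1) k) *
    ∏ k ∈ Finset.Icc (-(r:ℤ)-1) ((r:ℤ)+1),
      ((1 : F) - ωF - ((diagOf T r + k : ℤ) : F)) ^ gAdd T (r-1) k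

/-- The scalar `f(T) ∈ ℂ(ω)`, defined recursively by `f(∅) = 1`, `f(T) = f(U) φ(U,T)`. -/
def fT {n : ℕ} (T : UpDownTableau n) : ℕ → F
  | 0 => 1
  | r + 1 => fT T r * phiStep T (r+1)

/-- The hook length of the box `b` in the Young diagram `μ`. -/
def hookLength (μ : YoungDiagram) (b : ℕ × ℕ) : ℕ :=
  (μ.cells.filter fun c => c.1 = b.1 ∧ b.2 < c.2).card +
  (μ.cells.filter fun c => c.2 = b.2 ∧ b.1 < c.1).card + 1

/-- The product of the hook lengths of all boxes of `μ`. -/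
def hookProd (μ : YoungDiagram) : ℕ :=
  ∏ b ∈ μ.cells, hookLength μ b

/-- Polynomials in the variables `u_1, u_2, …` over `F = ℂ(ω)`. -/
abbrev MvP : Type := MvPolynomial ℕ F

/-- The field `F(u_1, u_2, …)` of rational functions in the variables `u_r` over `ℂ(ω)`. -/
abbrev KK : Type := FractionRing MvP

/-- Substituting `u_r = c` into a polynomial in the `u`'s. -/
def substOne (r : ℕ) (c : F) : MvP →ₐ[F] MvP :=
  MvPolynomial.aeval fun t => if t = r then MvPolynomial.C c else MvPolynomial.X t

/-- The variable `u_r` as an element of `KK`. -/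
def uVar (r : ℕ) : KK := algebraMap MvP KK (MvPolynomial.X r)

/-- A constant (an element of `ℂ(ω)`) as an element of `KK`. -/
def cK (x : F) : KK := algebraMap MvP KK (MvPolynomial.C x)

/-- The element `ω` of `KK`. -/
def ωK : KK := cK ωF

/-- `RegK r c f v` : the rational function `f ∈ F(u_1, u_2, …)`, viewed as a rational
function of the variable `u_r`, is regular at `u_r = c`, with value `v` there. -/
def RegK (r : ℕ) (c : F) (f v : KK) : Prop :=
  ∃ p q : MvP, substOne r c q ≠ 0 ∧
    f = algebraMap MvP KK p / algebraMap MvP KK q ∧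
    v = algebraMap MvP KK (substOne r c p) / algebraMap MvP KK (substOne r c q)

/-- The subring of "constants": the subring generated by the `s_i`, `e_i` and the
scalars from `ℂ(ω)` (i.e. the copy of the Brauer algebra `B_n(ω)` inside `B_n(ω) ⊗ KK`). -/
def constSubK [Algebra KK A] (s e : ℕ → A) : Subring A :=
  Subring.closure (Set.range s ∪ Set.range e ∪ Set.range fun x : F => algebraMap KK A (cK x))

/-- `RegStep s e r c a v` : the element `a` of `B ⊗ F(u_1,…,u_n)`, viewed as a rational
function of `u_r`, is regular at `u_r = c` with value `v`: it can be written as a finite sum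
`a = ∑ f_i • b_i` with constant `b_i` and coordinates `f_i` regular at `u_r = c` (denominators
not vanishing at `u_r = c`), whose values at `u_r = c` give `v = ∑ f_i(c) • b_i`. -/
def RegStep [Algebra KK A] (s e : ℕ → A) (r : ℕ) (c : F) (a v : A) : Prop :=
  ∃ (m : ℕ) (f g : Fin m → KK) (b : Fin m → A),
    (∀ i, RegK r c (f i) (g i)) ∧ (∀ i, b i ∈ constSubK s e) ∧
    a = ∑ i, f i • b i ∧ v = ∑ i, g i • b i

end BrauerFusion

/-!
Write `x_m = (ω-1)/2 + ∑_{r<m} (s_{rm} - e_{rm})` and fix a generator `g ∈ {s_i, e_i}` with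
`i + 2 ≤ m`. For `r > i + 1` the summand involves only generators far from `i`. For `r < i`,
conjugation by `s_r, …, s_{i-2}` fixes `g`, and `s_{i-1,m}`, `e_{i-1,m}` are the conjugates of
`s_{i+1,m}`, `e_{i+1,m}` by `s_{i-1} s_i`, which carries `g` to `s_{i-1}` resp. `e_{i-1}`, again
far from `s_{i+1,m}`, `e_{i+1,m}`. The two remaining summands are exchanged by conjugation with
`s_i`, and their sum is annihilated by `e_i` from either side, because
`e_i s_{i+1,m} = e_i e_{i+1,m} s_i`. Finally `x_r` is built from generators of index `≤ r - 1`,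
so it commutes with every `x_{r'}`, `r' > r`.
-/

namespace BrauerFusion

theorem commute_conj_of_semiconjBy {M : Type*} [Monoid M] {a b g g' x : M}
    (hab : a * b = 1) (hba : b * a = 1) (hg : SemiconjBy b g g') (hx : Commute g' x) :
    Commute g (a * x * b) := by
  have hga : g * a = a * g' := by
    calc g * a = a * (b * g) * a := by rw [← mul_assoc a, hab, one_mul]
      _ = a * g' := by rw [hg.eq, mul_assoc, mul_assoc, hba, mul_one]
  calc g * (a * x * b) = a * (g' * x) * b := by simp only [← mul_assoc, hga]
    _ = a * x * (g' * b) := by rw [hx.eq]; simp only [mul_assoc]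
    _ = a * x * b * g := by rw [← hg.eq]; simp only [mul_assoc]

theorem commute_conj_add_self {M : Type*} [Semiring M] {c y : M} (hc : c * c = 1) :
    Commute c (c * y * c + y) := by
  show c * (c * y * c + y) = (c * y * c + y) * c
  rw [mul_add, add_mul, ← mul_assoc, ← mul_assoc, hc, one_mul, mul_assoc (c * y), hc, mul_one,
    add_comm]

section Generators

variable {A : Type*} [Ring A]

theorem sij_of_lt (s : ℕ → A) {i j : ℕ} (h : i + 1 < j) :
    sij s i j = s i * sij s (i+1) j * s i := by
  rw [sij, dif_pos h]

theorem sij_of_not_lt (s : ℕ → A) {i j : ℕ} (h : ¬ i + 1 < j) : sij s i j = s i := by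
  rw [sij, dif_neg h]

theorem eij_of_lt (s e : ℕ → A) {i j : ℕ} (h : i + 1 < j) :
    eij s e i j = sij s i (j-1) * e (j-1) * sij s i (j-1) := by
  rw [eij, if_pos h]

theorem eij_of_not_lt (s e : ℕ → A) {i j : ℕ} (h : ¬ i + 1 < j) : eij s e i j = e i := by
  rw [eij, if_neg h]

theorem commute_sij_of_forall {x : A} {s : ℕ → A} {k m : ℕ} (hkm : k < m)
    (h : ∀ j, k ≤ j → j < m → Commute x (s j)) : Commute x (sij s k m) := by
  have hk := h k le_rfl hkm
  by_cases hlt : k + 1 < m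
  · rw [sij_of_lt s hlt]
    exact (hk.mul_right (commute_sij_of_forall hlt fun j hj hjm => h j (by omega) hjm)).mul_right hk
  · rwa [sij_of_not_lt s hlt]
termination_by m - k

theorem commute_sij_eij_of_forall {x : A} {s e : ℕ → A} {k m : ℕ} (hkm : k < m)
    (h : ∀ j, k ≤ j → j < m → Commute x (s j) ∧ Commute x (e j)) :
    Commute x (sij s k m) ∧ Commute x (eij s e k m) := by
  refine ⟨commute_sij_of_forall hkm fun j hj hjm => (h j hj hjm).1, ?_⟩
  by_cases hlt : k + 1 < m
  · rw [eij_of_lt s e hlt]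
    have hs : Commute x (sij s k (m-1)) :=
      commute_sij_of_forall (by omega) fun j hj hjm => (h j hj (by omega)).1
    exact (hs.mul_right (h (m-1) (by omega) (by omega)).2).mul_right hs
  · rw [eij_of_not_lt s e hlt]
    exact (h k le_rfl hkm).2

variable {R : Type*} [CommRing R] [Algebra R A] {n : ℕ} {ω : R} {s e : ℕ → A}

namespace IsBrauer

theorem commute_s_of_far (hB : IsBrauer n ω s e) {i j : ℕ} (hi : 1 ≤ i) (hij : i + 2 ≤ j)
    (hj : j + 1 ≤ n) :
    Commute (s i) (s j) ∧ Commute (s i) (e j) :=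
  ⟨hB.ss_comm i j hi hj (by omega), hB.se_comm i j hi hj (by omega)⟩

theorem commute_e_of_far (hB : IsBrauer n ω s e) {i j : ℕ} (hi : 1 ≤ i) (hij : i + 2 ≤ j)
    (hj : j + 1 ≤ n) :
    Commute (e i) (s j) ∧ Commute (e i) (e j) :=
  ⟨(hB.es_comm i j hi hj (by omega)).symm, hB.ee_comm i j hi hj (by omega)⟩

theorem eij_eq_conj (hB : IsBrauer n ω s e) {k m : ℕ} (hk : 1 ≤ k) (hkm : k + 2 ≤ m)
    (hm : m ≤ n) :
    eij s e k m = s k * eij s e (k+1) m * s k := by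
  by_cases hlt : k + 2 < m
  · have hc : Commute (s k) (e (m-1)) := hB.se_comm k (m-1) hk (by omega) (by omega)
    rw [eij_of_lt s e (show k + 1 < m by omega), eij_of_lt s e (show k + 1 + 1 < m by omega),
      sij_of_lt s (show k + 1 < m - 1 by omega)]
    simp only [mul_assoc]
    rw [hc.left_comm, ← mul_assoc (s k) (s k), hB.ss k hk (by omega), one_mul]
  · obtain rfl : m = k + 2 := by omega
    rw [eij_of_lt s e (by omega), eij_of_not_lt s e (by omega), show k + 2 - 1 = k + 1 from rfl,
      sij_of_not_lt s (by omega)]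

theorem e_mul_s_succ (hB : IsBrauer n ω s e) {i : ℕ} (hi : 1 ≤ i) (hin : i + 2 ≤ n) :
    e i * s (i+1) = e i * e (i+1) * s i := by
  rw [mul_assoc, ← hB.ees i hi hin, ← mul_assoc, ← mul_assoc, hB.eee₁ i hi hin]

theorem semiconjBy_s (hB : IsBrauer n ω s e) {i : ℕ} (hi : 1 ≤ i) (hin : i + 2 ≤ n) :
    SemiconjBy (s (i+1) * s i) (s (i+1)) (s i) := by
  show s (i+1) * s i * s (i+1) = s i * (s (i+1) * s i)
  rw [← mul_assoc, hB.braid i hi hin]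

theorem semiconjBy_e (hB : IsBrauer n ω s e) {i : ℕ} (hi : 1 ≤ i) (hin : i + 2 ≤ n) :
    SemiconjBy (s (i+1) * s i) (e (i+1)) (e i) := by
  have hss : s (i+1) * s (i+1) = 1 := hB.ss (i+1) (by omega) hin
  have hs_e : s i * e (i+1) = s (i+1) * e i * e (i+1) := by
    rw [← hB.see i hi hin]
    simp only [mul_assoc]
    rw [← mul_assoc (e (i+1)) (e i), hB.eee₂ i hi hin]
  show s (i+1) * s i * e (i+1) = e i * (s (i+1) * s i)
  rw [mul_assoc, hs_e, ← mul_assoc, ← mul_assoc, hss, one_mul, ← mul_assoc,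
    hB.e_mul_s_succ hi hin, mul_assoc _ (s i), hB.ss i hi (by omega), mul_one]

theorem commute_sij_eij_of_lt (hB : IsBrauer n ω s e) {g g' : A} {i m k : ℕ} (hi : 1 ≤ i)
    (him : i + 3 ≤ m) (hm : m ≤ n)
    (hconj : SemiconjBy (s (i+1) * s i) g g')
    (hg' : ∀ j, i + 2 ≤ j → j < m → Commute g' (s j) ∧ Commute g' (e j))
    (hg : ∀ j, 1 ≤ j → j < i → Commute g (s j)) (hk : 1 ≤ k) (hki : k ≤ i) :
    Commute g (sij s k m) ∧ Commute g (eij s e k m) := by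
  rcases hki.lt_or_eq with hki | rfl
  · obtain ⟨ihs, ihe⟩ := commute_sij_eij_of_lt hB hi him hm hconj hg' hg (by omega) hki
    have hgk := hg k hk hki
    rw [sij_of_lt s (by omega), hB.eij_eq_conj hk (by omega) hm]
    exact ⟨(hgk.mul_right ihs).mul_right hgk, (hgk.mul_right ihe).mul_right hgk⟩
  · have hss : ∀ j, 1 ≤ j → j < m → s j * s j = 1 := fun j hj hjm => hB.ss j hj (by omega)
    have hab : s k * s (k+1) * (s (k+1) * s k) = 1 := by
      rw [mul_assoc, ← mul_assoc (s (k+1)), hss (k+1) (by omega) (by omega), one_mul,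
        hss k hk (by omega)]
    have hba : s (k+1) * s k * (s k * s (k+1)) = 1 := by
      rw [mul_assoc, ← mul_assoc (s k), hss k hk (by omega), one_mul,
        hss (k+1) (by omega) (by omega)]
    obtain ⟨hXs, hXe⟩ := commute_sij_eij_of_forall (k := k + 2) (by omega) hg'
    rw [sij_of_lt s (by omega), sij_of_lt s (by omega), hB.eij_eq_conj hk (by omega) hm,
      hB.eij_eq_conj (by omega) (by omega) hm]
    simp only [← mul_assoc]
    rw [mul_assoc _ (s (k+1)) (s k), mul_assoc _ (s (k+1)) (s k)]
    exact ⟨commute_conj_of_semiconjBy hab hba hconj hXs,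
      commute_conj_of_semiconjBy hab hba hconj hXe⟩
termination_by i - k

theorem commute_sij_sub_eij_of_ne (hB : IsBrauer n ω s e) {i m r : ℕ} (hi : 1 ≤ i)
    (him : i + 2 ≤ m) (hm : m ≤ n) (hr : 1 ≤ r) (hrm : r < m) (hri : r ≠ i)
    (hri' : r ≠ i + 1) :
    Commute (s i) (sij s r m - eij s e r m) ∧ Commute (e i) (sij s r m - eij s e r m) := by
  rcases lt_or_gt_of_ne hri with hri | hri
  · obtain ⟨p, rfl⟩ : ∃ p, i = p + 1 := ⟨i - 1, by omega⟩
    have hs := hB.commute_sij_eij_of_lt (g := s (p+1)) (by omega) (by omega) hm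
      (hB.semiconjBy_s (by omega) (by omega))
      (fun j hj hjm => hB.commute_s_of_far (by omega) hj (by omega))
      (fun j hj hjp => (hB.ss_comm j (p+1) hj (by omega) (by omega)).symm) hr (by omega)
    have he := hB.commute_sij_eij_of_lt (g := e (p+1)) (by omega) (by omega) hm
      (hB.semiconjBy_e (by omega) (by omega))
      (fun j hj hjm => hB.commute_e_of_far (by omega) hj (by omega))
      (fun j hj hjp => (hB.se_comm j (p+1) hj (by omega) (by omega)).symm) hr (by omega)
    exact ⟨hs.1.sub_right hs.2, he.1.sub_right he.2⟩
  · have hs := commute_sij_eij_of_forall (x := s i) (e := e) hrm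
      fun j hj hjm => hB.commute_s_of_far hi (by omega) (by omega)
    have he := commute_sij_eij_of_forall (x := e i) (e := e) hrm
      fun j hj hjm => hB.commute_e_of_far hi (by omega) (by omega)
    exact ⟨hs.1.sub_right hs.2, he.1.sub_right he.2⟩

theorem commute_s_pair (hB : IsBrauer n ω s e) {i m : ℕ} (hi : 1 ≤ i) (him : i + 2 ≤ m)
    (hm : m ≤ n) :
    Commute (s i) ((sij s i m - eij s e i m) + (sij s (i+1) m - eij s e (i+1) m)) := by
  have hconj : sij s i m - eij s e i m = s i * (sij s (i+1) m - eij s e (i+1) m) * s i := by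
    rw [sij_of_lt s (by omega), hB.eij_eq_conj hi him hm, mul_sub, sub_mul]
  rw [hconj]
  exact commute_conj_add_self (hB.ss i hi (by omega))

theorem e_mul_sij_succ (hB : IsBrauer n ω s e) {i m : ℕ} (hi : 1 ≤ i) (him : i + 2 ≤ m)
    (hm : m ≤ n) : e i * sij s (i+1) m = e i * eij s e (i+1) m * s i := by
  rcases him.lt_or_eq with him | rfl
  · obtain ⟨hcX, hcY⟩ := commute_sij_eij_of_forall (x := s i) (s := s) (e := e) (k := i + 2)
      (by omega) fun j hj hjm => hB.commute_s_of_far hi hj (by omega)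
    have ih := hB.e_mul_sij_succ (i := i + 1) (by omega) (by omega) hm
    have hbraid := hB.braid i hi (by omega)
    rw [sij_of_lt s (by omega), hB.eij_eq_conj (by omega) (by omega) hm]
    calc e i * (s (i+1) * sij s (i+2) m * s (i+1))
        = e i * s (i+1) * sij s (i+2) m * s (i+1) := by simp only [mul_assoc]
      _ = e i * e (i+1) * (s i * sij s (i+2) m) * s (i+1) := by
          rw [hB.e_mul_s_succ hi (by omega)]; simp only [mul_assoc]
      _ = e i * (e (i+1) * sij s (i+2) m) * (s i * s (i+1)) := by
          rw [hcX.eq]; simp only [mul_assoc]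
      _ = e i * e (i+1) * eij s e (i+2) m * (s (i+1) * s i * s (i+1)) := by
          rw [ih]; simp only [mul_assoc]
      _ = e i * e (i+1) * (s i * eij s e (i+2) m) * (s (i+1) * s i) := by
          rw [← hbraid, hcY.eq]; simp only [mul_assoc]
      _ = e i * (s (i+1) * eij s e (i+2) m * s (i+1)) * s i := by
          simp only [← mul_assoc]; rw [hB.e_mul_s_succ hi (by omega)]
  · rw [sij_of_not_lt s (by omega), eij_of_not_lt s e (by omega)]
    exact hB.e_mul_s_succ hi hm
termination_by m - i

theorem sij_succ_mul_e (hB : IsBrauer n ω s e) {i m : ℕ} (hi : 1 ≤ i) (him : i + 2 ≤ m)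
    (hm : m ≤ n) : sij s (i+1) m * e i = s i * eij s e (i+1) m * e i := by
  rcases him.lt_or_eq with him | rfl
  · obtain ⟨hcX, hcY⟩ := commute_sij_eij_of_forall (x := s i) (s := s) (e := e) (k := i + 2)
      (by omega) fun j hj hjm => hB.commute_s_of_far hi hj (by omega)
    have ih := hB.sij_succ_mul_e (i := i + 1) (by omega) (by omega) hm
    have hbraid := hB.braid i hi (by omega)
    have hsee := hB.see i hi (by omega)
    rw [sij_of_lt s (by omega), hB.eij_eq_conj (by omega) (by omega) hm]
    calc s (i+1) * sij s (i+2) m * s (i+1) * e i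
        = s (i+1) * (sij s (i+2) m * s i) * e (i+1) * e i := by
          rw [mul_assoc _ (s (i+1)), ← hsee]; simp only [mul_assoc]
      _ = s (i+1) * s i * (sij s (i+2) m * e (i+1)) * e i := by
          rw [← hcX.eq]; simp only [mul_assoc]
      _ = s (i+1) * s i * s (i+1) * eij s e (i+2) m * e (i+1) * e i := by
          rw [ih]; simp only [mul_assoc]
      _ = s i * s (i+1) * (eij s e (i+2) m * s i) * e (i+1) * e i := by
          rw [← hbraid, ← hcY.eq]; simp only [mul_assoc]
      _ = s i * (s (i+1) * eij s e (i+2) m * s (i+1)) * e i := by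
          simp only [mul_assoc]; rw [← mul_assoc (s i) (e (i+1)) (e i), hsee]
  · rw [sij_of_not_lt s (by omega), eij_of_not_lt s e (by omega)]
    exact (hB.see i hi hm).symm
termination_by m - i

theorem commute_e_pair (hB : IsBrauer n ω s e) {i m : ℕ} (hi : 1 ≤ i) (him : i + 2 ≤ m)
    (hm : m ≤ n) :
    Commute (e i) ((sij s i m - eij s e i m) + (sij s (i+1) m - eij s e (i+1) m)) := by
  have hss := hB.ss i hi (by omega)
  have hes := hB.es i hi (by omega)
  have hse := hB.se i hi (by omega)
  have hP := hB.e_mul_sij_succ hi him hm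
  have hP' := hB.sij_succ_mul_e hi him hm
  have hs_conj := sij_of_lt s (show i + 1 < m by omega)
  have he_conj := hB.eij_eq_conj hi him hm
  have hl₁ : e i * sij s i m = e i * eij s e (i+1) m := by
    rw [hs_conj, ← mul_assoc, ← mul_assoc, hes, hP, mul_assoc, hss, mul_one]
  have hl₂ : e i * eij s e i m = e i * sij s (i+1) m := by
    rw [he_conj, ← mul_assoc, ← mul_assoc, hes, ← hP]
  have hr₁ : sij s i m * e i = eij s e (i+1) m * e i := by
    rw [hs_conj, mul_assoc, hse, mul_assoc, hP', ← mul_assoc, ← mul_assoc, hss, one_mul]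
  have hr₂ : eij s e i m * e i = sij s (i+1) m * e i := by
    rw [he_conj, mul_assoc, hse, ← hP']
  show e i * _ = _ * e i
  rw [mul_add, add_mul, mul_sub, mul_sub, sub_mul, sub_mul, hl₁, hl₂, hr₁, hr₂]
  abel

end IsBrauer

end Generators

section JucysMurphy

variable {A : Type*} [Ring A] {R : Type*} [Field R] [Algebra R A] {n : ℕ} {ω : R}
  {s e : ℕ → A}

theorem commute_jm_of_forall {x : A} {r : ℕ}
    (h : ∀ j, 1 ≤ j → j < r → Commute x (s j) ∧ Commute x (e j)) :
    Commute x (jm ω s e r) := by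
  refine (Algebra.commute_algebraMap_right _ x).add_right
    (Commute.sum_right _ _ _ fun t ht => ?_)
  rw [Finset.mem_Icc] at ht
  obtain ⟨hs, he⟩ := commute_sij_eij_of_forall (e := e) (k := t) (m := r) (by omega)
    fun j hj hjr => h j (by omega) hjr
  exact hs.sub_right he

theorem commute_jm_of_pair {x : A} {i m : ℕ} (hi : 1 ≤ i) (him : i + 2 ≤ m)
    (hpair : Commute x ((sij s i m - eij s e i m) + (sij s (i+1) m - eij s e (i+1) m)))
    (hrest : ∀ r, 1 ≤ r → r < m → r ≠ i → r ≠ i + 1 →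
      Commute x (sij s r m - eij s e r m)) :
    Commute x (jm ω s e m) := by
  refine (Algebra.commute_algebraMap_right _ x).add_right ?_
  have hi_mem : i ∈ Finset.Icc 1 (m-1) := Finset.mem_Icc.2 ⟨hi, by omega⟩
  have hi'_mem : i + 1 ∈ (Finset.Icc 1 (m-1)).erase i :=
    Finset.mem_erase.2 ⟨by omega, Finset.mem_Icc.2 ⟨by omega, by omega⟩⟩
  rw [← Finset.add_sum_erase _ _ hi_mem, ← Finset.add_sum_erase _ _ hi'_mem, ← add_assoc]
  refine hpair.add_right (Commute.sum_right _ _ _ fun r hr => ?_)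
  simp only [Finset.mem_erase, Finset.mem_Icc] at hr
  exact hrest r (by omega) (by omega) hr.2.1 hr.1

theorem IsBrauer.commute_jm (hB : IsBrauer n ω s e) {i m : ℕ} (hi : 1 ≤ i) (him : i + 2 ≤ m)
    (hm : m ≤ n) : Commute (jm ω s e m) (s i) ∧ Commute (jm ω s e m) (e i) := by
  refine ⟨(commute_jm_of_pair hi him (hB.commute_s_pair hi him hm)
      fun r hr hrm hri hri' => ?_).symm,
    (commute_jm_of_pair hi him (hB.commute_e_pair hi him hm) fun r hr hrm hri hri' => ?_).symm⟩
  exacts [(hB.commute_sij_sub_eij_of_ne hi him hm hr hrm hri hri').1,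
    (hB.commute_sij_sub_eij_of_ne hi him hm hr hrm hri hri').2]

end JucysMurphy

/-- The Jucys–Murphy element `x_n` commutes with each of the generators
`s_1,…,s_{n-2}`, `e_1,…,e_{n-2}` (hence with the whole subalgebra `B_{n-1}(ω)`), and
the elements `x_1,…,x_n` pairwise commute.  This is stated in any algebra over
`F = ℂ(ω)` whose elements `s i`, `e i` satisfy the Brauer relations. -/
theorem jm_commutes {A : Type*} [Ring A] [Algebra F A]
    (n : ℕ) (s e : ℕ → A) (hB : IsBrauer n ωF s e) :
    (∀ i, 1 ≤ i → i + 2 ≤ n →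
      Commute (jm ωF s e n) (s i) ∧ Commute (jm ωF s e n) (e i)) ∧
    (∀ r r', 1 ≤ r → r ≤ n → 1 ≤ r' → r' ≤ n →
      Commute (jm ωF s e r) (jm ωF s e r')) := by
  have hlt : ∀ r r', r < r' → r' ≤ n → Commute (jm ωF s e r) (jm ωF s e r') :=
    fun r r' hrr' hr'n => (commute_jm_of_forall fun j hj hjr =>
      hB.commute_jm hj (by omega) hr'n).symm
  refine ⟨fun i hi hin => hB.commute_jm hi hin le_rfl, fun r r' _ hrn _ hr'n => ?_⟩
  rcases lt_trichotomy r r' with h | rfl | h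
  · exact hlt r r' h hr'n
  · exact Commute.refl _
  · exact (hlt r' r h hrn).symm

end BrauerFusion
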